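/- arXiv:1004.5263 — 2 statements merged into one kernel-verified Lean document; each statement's English description precedes it below -/
import Mathlib

section
/- For a positive path of Legendrian immersions, the vertical speed at every non-vertical point is positive. Precisely, in the model J¹(ℝⁿ) = ℝⁿ × ℝⁿ × ℝ: let L be a smooth n-dimensional manifold and let φ : (a,b) × L → ℝⁿ × ℝⁿ × ℝ, φ_t(x) = (q_t(x), p_t(x), u_t(x)), be a smooth family such that each φ_t is a Legendrian immersion and α(φ_t(x))(∂_t φ_t(x)) > 0 for all t, x. Let t₀ ∈ (a,b) and let x₀ ∈ L be a non-vertical point of φ_{t₀}, i.e. the differential of q_{t₀} : L → ℝⁿ at x₀ is invertible. Then for every C¹ curve x(t) in L defined near t₀ with x(t₀) = x₀ and q_t(x(t)) = q_{t₀}(x₀) for all t, the derivative (d/dt)|_{t=t₀} u_t(x(t)) is strictly positive. (Lemma 1 of the paper.) -/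
/- STATEMENT 9 (Lemma 1 of the paper): for a positive path of Legendrian immersions in
J¹(ℝⁿ) = ℝⁿ × ℝⁿ × ℝ (contact form α = du − p·dq), the vertical speed at every
non-vertical point is positive. -/

open scoped Manifold RealInnerProductSpace
open Set

noncomputable section

/-- The space J¹(ℝⁿ) = ℝⁿ × ℝⁿ × ℝ, with coordinates (q,p,u). -/
abbrev J1 (n : ℕ) : Type := EuclideanSpace ℝ (Fin n) × EuclideanSpace ℝ (Fin n) × ℝ

/-- The contact form α = du − p·dq, evaluated at `x = (q,p,u)` on `v = (Q,P,U)`. -/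
def contactForm {n : ℕ} (x v : J1 n) : ℝ := v.2.2 - ⟪x.2.1, v.1⟫

variable (n : ℕ) (L : Type*) [TopologicalSpace L] [T2Space L]
  [ChartedSpace (EuclideanSpace ℝ (Fin n)) L] [IsManifold (𝓡 n) (⊤ : ℕ∞) L]

/-- A Legendrian immersion of a smooth n-manifold `L` into J¹(ℝⁿ). -/
def IsLegendrianImmersion (ι : L → J1 n) : Prop :=
  ContMDiff (𝓡 n) 𝓘(ℝ, J1 n) (⊤ : ℕ∞) ι ∧
  (∀ x, Function.Injective (mfderiv (𝓡 n) 𝓘(ℝ, J1 n) ι x)) ∧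
  (∀ x (v : TangentSpace (𝓡 n) x),
    contactForm (ι x) (mfderiv (𝓡 n) 𝓘(ℝ, J1 n) ι x v) = 0)

/-- Let φ : (a,b) × L → J¹(ℝⁿ) be a smooth family of Legendrian
immersions which is a positive path, let t₀ ∈ (a,b), and let x₀ be a non-vertical point
of φ_{t₀} (the differential at x₀ of the q-component of φ_{t₀} is invertible).  Then for
every C¹ curve x(t) defined near t₀ with x(t₀) = x₀ along which the q-coordinate of
φ_t(x(t)) is constant, the derivative at t₀ of the u-coordinate t ↦ u_t(x(t)) is
strictly positive. -/
theorem vertical_speed_positive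
    (a b : ℝ) (φ : ℝ → L → J1 n)
    (hφ : ContMDiffOn (𝓘(ℝ, ℝ).prod (𝓡 n)) 𝓘(ℝ, J1 n) (⊤ : ℕ∞)
      (fun p : ℝ × L => φ p.1 p.2) (Ioo a b ×ˢ univ))
    (hleg : ∀ t ∈ Ioo a b, IsLegendrianImmersion n L (φ t))
    (hpos : ∀ t ∈ Ioo a b, ∀ x, 0 < contactForm (φ t x) (deriv (fun s => φ s x) t))
    (t₀ : ℝ) (ht₀ : t₀ ∈ Ioo a b) (x₀ : L)
    (hnv : Function.Bijective
      (mfderiv (𝓡 n) 𝓘(ℝ, EuclideanSpace ℝ (Fin n)) (fun y => (φ t₀ y).1) x₀))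
    (x : ℝ → L) (ε : ℝ) (hε : 0 < ε)
    (hxC1 : ContMDiffOn 𝓘(ℝ, ℝ) (𝓡 n) 1 x (Ioo (t₀ - ε) (t₀ + ε)))
    (hx0 : x t₀ = x₀)
    (hq : ∀ t ∈ Ioo (t₀ - ε) (t₀ + ε), (φ t (x t)).1 = (φ t₀ x₀).1) :
    0 < deriv (fun t => (φ t (x t)).2.2) t₀ := by
  subst hx0
  obtain ⟨hsm, hinj, hcon⟩ := hleg t₀ ht₀
  have hopen : IsOpen (Ioo a b ×ˢ (univ : Set L)) := isOpen_Ioo.prod isOpen_univ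
  have hmem : (t₀, x t₀) ∈ Ioo a b ×ˢ (univ : Set L) := ⟨ht₀, mem_univ _⟩
  have hψ : MDifferentiableAt (𝓘(ℝ, ℝ).prod (𝓡 n)) 𝓘(ℝ, J1 n)
      (fun p : ℝ × L => φ p.1 p.2) (t₀, x t₀) :=
    (hφ.contMDiffAt (hopen.mem_nhds hmem)).mdifferentiableAt (by simp)
  have htx : t₀ ∈ Ioo (t₀ - ε) (t₀ + ε) := by constructor <;> linarith
  have hxd : MDifferentiableAt 𝓘(ℝ, ℝ) (𝓡 n) x t₀ :=
    (hxC1.contMDiffAt (isOpen_Ioo.mem_nhds htx)).mdifferentiableAt one_ne_zero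
  have hcd : MDifferentiableAt 𝓘(ℝ, ℝ) ((𝓘(ℝ, ℝ)).prod (𝓡 n)) (fun t => (t, x t)) t₀ :=
    mdifferentiableAt_id.prodMk hxd
  have hfd : MDifferentiableAt 𝓘(ℝ, ℝ) 𝓘(ℝ, J1 n) (fun t => φ t (x t)) t₀ :=
    hψ.comp t₀ hcd
  set e1 : TangentSpace 𝓘(ℝ, ℝ) t₀ := (1 : ℝ) with he1
  set v : TangentSpace (𝓡 n) (x t₀) := mfderiv 𝓘(ℝ, ℝ) (𝓡 n) x t₀ e1 with hv
  set D := mfderiv (𝓡 n) 𝓘(ℝ, J1 n) (φ t₀) (x t₀) with hD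
  set w : J1 n := D v with hw
  set T : J1 n := deriv (fun s => φ s (x t₀)) t₀ with hT
  have hpart : mfderiv 𝓘(ℝ, ℝ) 𝓘(ℝ, J1 n) (fun s => φ s (x t₀)) t₀ e1 = T := by
    rw [mfderiv_eq_fderiv]; rfl
  have hchain : mfderiv 𝓘(ℝ, ℝ) 𝓘(ℝ, J1 n) (fun t => φ t (x t)) t₀ e1 = T + w := by
    have h1 : (fun t => φ t (x t)) = (fun p : ℝ × L => φ p.1 p.2) ∘ (fun t => (t, x t)) := rfl
    rw [h1, mfderiv_comp t₀ hψ hcd]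
    have h2 : mfderiv 𝓘(ℝ, ℝ) ((𝓘(ℝ, ℝ)).prod (𝓡 n)) (fun t => (t, x t)) t₀ e1
        = (show TangentSpace ((𝓘(ℝ, ℝ)).prod (𝓡 n)) (t₀, x t₀) from (e1, v)) := by
      have h3 := mdifferentiableAt_id.mfderiv_prod (I := 𝓘(ℝ, ℝ)) hxd
      rw [mfderiv_id] at h3
      simp only [id_eq] at h3
      rw [h3]
      exact rfl
    rw [ContinuousLinearMap.comp_apply, h2, mfderiv_prod_eq_add_apply hψ]
    show mfderiv 𝓘(ℝ, ℝ) 𝓘(ℝ, J1 n) (fun s => φ s (x t₀)) t₀ e1 + D v = T + w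
    rw [hpart]; rfl
  have hf' : HasDerivAt (fun t => φ t (x t)) (T + w) t₀ := by
    have hd : DifferentiableAt ℝ (fun t => φ t (x t)) t₀ :=
      mdifferentiableAt_iff_differentiableAt.mp hfd
    have : deriv (fun t => φ t (x t)) t₀ = T + w := by
      rw [← hchain, mfderiv_eq_fderiv]; rfl
    exact this ▸ hd.hasDerivAt
  -- q-component
  have hq1 : HasDerivAt (fun t => (φ t (x t)).1) ((T + w).1) t₀ :=
    ((ContinuousLinearMap.fst ℝ (EuclideanSpace ℝ (Fin n))
      (EuclideanSpace ℝ (Fin n) × ℝ)).hasFDerivAt.comp_hasDerivAt t₀ hf')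
  have hq2 : HasDerivAt (fun t => (φ t (x t)).1) 0 t₀ := by
    refine (hasDerivAt_const t₀ ((φ t₀ (x t₀)).1)).congr_of_eventuallyEq ?_
    filter_upwards [isOpen_Ioo.mem_nhds htx] with t ht using hq t ht
  have hq0 : T.1 + w.1 = 0 := by
    have h := hq1.unique hq2
    simpa [Prod.add_def] using h
  -- u-component
  have hu : HasDerivAt (fun t => (φ t (x t)).2.2) ((T + w).2.2) t₀ :=
    (((ContinuousLinearMap.snd ℝ (EuclideanSpace ℝ (Fin n)) ℝ).comp
      (ContinuousLinearMap.snd ℝ (EuclideanSpace ℝ (Fin n))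
        (EuclideanSpace ℝ (Fin n) × ℝ))).hasFDerivAt.comp_hasDerivAt t₀ hf')
  rw [hu.deriv]
  have hcontact : w.2.2 - ⟪(φ t₀ (x t₀)).2.1, w.1⟫ = 0 := hcon (x t₀) v
  have hposT : 0 < T.2.2 - ⟪(φ t₀ (x t₀)).2.1, T.1⟫ := hpos t₀ ht₀ (x t₀)
  have hwq : w.1 = -T.1 := by
    rw [add_comm] at hq0
    exact eq_neg_of_add_eq_zero_left hq0
  have hinner : ⟪(φ t₀ (x t₀)).2.1, w.1⟫ = -⟪(φ t₀ (x t₀)).2.1, T.1⟫ := by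
    rw [hwq, inner_neg_right]
  have : (T + w).2.2 = T.2.2 + w.2.2 := rfl
  rw [this]
  linarith

end
end

section
/- Let f : ℝⁿ → ℝ be a smooth function having 0 as a regular value (i.e. if f(q) = 0 then the gradient ∇f(q) ≠ 0). Define Φ : ℝ × ℝⁿ → ℝⁿ × ℝⁿ × ℝ by Φ(λ, q) = (q, λ∇f(q), λf(q)), so that Φ({λ} × ℝⁿ) is the 1-jet extension j¹(λf). Then Φ is injective, and its differential DΦ(λ,q) : ℝ × ℝⁿ → ℝⁿ × ℝⁿ × ℝ is injective at every point (λ,q); i.e. Φ is an injective immersion. (The claim of Section 1.3 of the paper, in the model N = ℝⁿ: the union Λ of the j¹(λf), λ ∈ ℝ, is a smooth embedding of ℝ × N in J¹(N), foliated by the j¹(λf).) -/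
/- STATEMENT 17 (Section 1.3 of the paper, model N = ℝⁿ): if f : ℝⁿ → ℝ is smooth with 0
as a regular value, then Φ : ℝ × ℝⁿ → J¹(ℝⁿ) = ℝⁿ × ℝⁿ × ℝ, Φ(λ,q) = (q, λ∇f(q), λf(q)),
is an injective immersion; i.e. the union Λ of the j¹(λf) is a smooth embedding of
ℝ × ℝⁿ in J¹(ℝⁿ), foliated by the j¹(λf). -/

open scoped RealInnerProductSpace

noncomputable section

/-- Φ(λ,q) = (q, λ∇f(q), λf(q)), so that Φ({λ} × ℝⁿ) = j¹(λf)(ℝⁿ). -/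
def PhiMap (n : ℕ) (f : EuclideanSpace ℝ (Fin n) → ℝ)
    (p : ℝ × EuclideanSpace ℝ (Fin n)) :
    EuclideanSpace ℝ (Fin n) × EuclideanSpace ℝ (Fin n) × ℝ :=
  (p.2, p.1 • gradient f p.2, p.1 * f p.2)

/-- For smooth f with 0 a regular value, Φ is injective and its
differential is injective at every point. -/
theorem lambda_is_injective_immersion
    (n : ℕ) (f : EuclideanSpace ℝ (Fin n) → ℝ) (hf : ContDiff ℝ (⊤ : ℕ∞) f)
    (hreg : ∀ q, f q = 0 → gradient f q ≠ 0) :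
    Function.Injective (PhiMap n f) ∧
    ∀ p : ℝ × EuclideanSpace ℝ (Fin n),
      Function.Injective (fderiv ℝ (PhiMap n f) p) := by
  have hgd : Differentiable ℝ (gradient f) := by
    have h1 : Differentiable ℝ (fderiv ℝ f) := (hf.fderiv_right (m := 1) (by exact WithTop.coe_le_coe.mpr (le_top : (1 + 1 : ℕ∞) ≤ ⊤))).differentiable one_ne_zero
    have h2 : gradient f = fun x =>
        (InnerProductSpace.toDual ℝ (EuclideanSpace ℝ (Fin n))).symm (fderiv ℝ f x) := rfl
    rw [h2]
    exact ((InnerProductSpace.toDual ℝ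
      (EuclideanSpace ℝ (Fin n))).symm.toContinuousLinearMap.differentiable).comp h1
  constructor
  · rintro ⟨a, qa⟩ ⟨b, qb⟩ h
    simp only [PhiMap, Prod.mk.injEq] at h
    obtain ⟨h1, h2, h3⟩ := h
    subst h1
    refine Prod.ext ?_ rfl
    by_cases hfq : f qa = 0
    · have hgq := hreg qa hfq
      by_contra hab
      have hz : (a - b) • gradient f qa = 0 := by rw [sub_smul, h2, sub_self]
      rcases smul_eq_zero.mp hz with h | h
      · exact hab (sub_eq_zero.mp h)
      · exact hgq h
    · have : (a - b) * f qa = 0 := by rw [sub_mul, h3, sub_self]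
      rcases mul_eq_zero.mp this with h | h
      · exact sub_eq_zero.mp h
      · exact absurd h hfq
  · rintro ⟨l, q⟩
    set A : (ℝ × EuclideanSpace ℝ (Fin n)) →L[ℝ] EuclideanSpace ℝ (Fin n) :=
      l • ((fderiv ℝ (gradient f) q).comp
          (ContinuousLinearMap.snd ℝ ℝ (EuclideanSpace ℝ (Fin n)))) +
        (ContinuousLinearMap.fst ℝ ℝ (EuclideanSpace ℝ (Fin n))).smulRight (gradient f q)
      with hA
    set B : (ℝ × EuclideanSpace ℝ (Fin n)) →L[ℝ] ℝ :=
      l • ((fderiv ℝ f q).comp (ContinuousLinearMap.snd ℝ ℝ (EuclideanSpace ℝ (Fin n)))) +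
        f q • (ContinuousLinearMap.fst ℝ ℝ (EuclideanSpace ℝ (Fin n))) with hB
    have HA : HasFDerivAt (fun p : ℝ × EuclideanSpace ℝ (Fin n) => p.1 • gradient f p.2)
        A (l, q) :=
      by have := (hasFDerivAt_fst (𝕜 := ℝ) (p := (l, q))).smul (((hgd q).hasFDerivAt).comp (l, q) (hasFDerivAt_snd (𝕜 := ℝ) (p := (l, q)))); exact this
    have HB : HasFDerivAt (fun p : ℝ × EuclideanSpace ℝ (Fin n) => p.1 * f p.2) B (l, q) :=
      by
        have := (hasFDerivAt_fst (𝕜 := ℝ) (p := (l, q))).mul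
          (((hf.differentiable (by simp) q).hasFDerivAt).comp (l, q) (hasFDerivAt_snd (𝕜 := ℝ) (p := (l, q))))
        exact this
    have H : HasFDerivAt (PhiMap n f)
        ((ContinuousLinearMap.snd ℝ ℝ (EuclideanSpace ℝ (Fin n))).prod (A.prod B)) (l, q) :=
      by have := HasFDerivAt.prodMk (hasFDerivAt_snd (𝕜 := ℝ) (p := (l, q))) (HasFDerivAt.prodMk HA HB); exact this
    rw [H.fderiv]
    have key : ∀ z : ℝ × EuclideanSpace ℝ (Fin n),
        ((ContinuousLinearMap.snd ℝ ℝ (EuclideanSpace ℝ (Fin n))).prod (A.prod B)) z = 0 →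
          z = 0 := by
      rintro ⟨μ, v⟩ hz
      simp only [ContinuousLinearMap.prod_apply, Prod.mk_eq_zero] at hz
      obtain ⟨hv, hz2, hz3⟩ := hz
      subst hv
      simp [hA, hB] at hz2 hz3
      have hμ : μ = 0 := by
        by_cases hfq : f q = 0
        · rcases hz2 with h | h
          · exact h
          · exact absurd h (hreg q hfq)
        · rcases hz3 with h | h
          · exact absurd h hfq
          · exact h
      simp [hμ]
    intro x y hxy
    exact sub_eq_zero.mp (key (x - y) (by rw [map_sub, hxy, sub_self]))

end
end
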